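/- Let Op be a compatible aggregation operator on an argumentation framework AF = ⟨𝒜, ⇀⟩, let ℒ₁,…,ℒₙ be the agents' most preferred labelings and P = (ℒ₁,…,ℒₙ) the sincere profile. Suppose every strategic lie with respect to Hamming distance based preferences is benevolent, i.e. for every agent k and labeling ℒ'ₖ with Op(P') ≻_{k,|⊖|} Op(P) (where P' is P with ℒₖ replaced by ℒ'ₖ), it holds that Op(P') ⪰_{i,|⊖|} Op(P) for every agent i and Op(P') ≻_{j,|⊖|} Op(P) for some agent j ≠ k. Then every strategic lie with respect to IUO Hamming distance based preferences is benevolent: for every agent k and labeling ℒ'ₖ with Op(P') ≻_{k,|⊖ᴹ|} Op(P), it holds that Op(P') ⪰_{i,|⊖ᴹ|} Op(P) for every agent i and Op(P') ≻_{j,|⊖ᴹ|} Op(P) for some agent j ≠ k. -/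
import Mathlib


/- Labels for arguments: in, out, undec -/
inductive Lab where
  | IN : Lab
  | OUT : Lab
  | UNDEC : Lab
deriving DecidableEq

variable {A : Type}

/-- Arguments labeled `in` by a labeling. -/
def labIn (L : A → Lab) : Set A := {a | L a = Lab.IN}
/-- Arguments labeled `out` by a labeling. -/
def labOut (L : A → Lab) : Set A := {a | L a = Lab.OUT}
/-- Arguments labeled `undec` by a labeling. -/
def labUndec (L : A → Lab) : Set A := {a | L a = Lab.UNDEC}
/-- Decided arguments: labeled `in` or `out`. -/
def labDec (L : A → Lab) : Set A := labIn L ∪ labOut L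

/-- Admissible labeling with respect to a defeat relation `df` (`df b a` : b defeats a). -/
def Admissible (df : A → A → Prop) (L : A → Lab) : Prop :=
  ∀ a : A,
    (L a = Lab.IN → ∀ b : A, df b a → L b = Lab.OUT) ∧
    (L a = Lab.OUT → ∃ b : A, df b a ∧ L b = Lab.IN)

/-- Complete labeling. -/
def Complete (df : A → A → Prop) (L : A → Lab) : Prop :=
  Admissible df L ∧
  ∀ a : A, L a = Lab.UNDEC →
    ¬ (∀ b : A, df b a → L b = Lab.OUT) ∧ ¬ (∃ b : A, df b a ∧ L b = Lab.IN)

/-- `L1 ⊑ L2` : less or equally committed. -/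
def LabLeq (L1 L2 : A → Lab) : Prop := labIn L1 ⊆ labIn L2 ∧ labOut L1 ⊆ labOut L2

/-- `L1 ≈ L2` : compatible labelings. -/
def LabCompatible (L1 L2 : A → Lab) : Prop :=
  labIn L1 ∩ labOut L2 = ∅ ∧ labOut L1 ∩ labIn L2 = ∅

/-- Hamming set `L1 ⊖ L2`. -/
def hamSet (L1 L2 : A → Lab) : Set A := {a | L1 a ≠ L2 a}
/-- Hamming distance `L1 |⊖| L2`. -/
noncomputable def hamDist (L1 L2 : A → Lab) : ℕ := (hamSet L1 L2).ncard

/-- in–out Hamming set `L1 ⊖ⁱᵒ L2`. -/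
def ioSet (L1 L2 : A → Lab) : Set A :=
  {a | (L1 a = Lab.IN ∧ L2 a = Lab.OUT) ∨ (L1 a = Lab.OUT ∧ L2 a = Lab.IN)}
/-- dec–undec Hamming set `L1 ⊖ᵈᵘ L2`. -/
def duSet (L1 L2 : A → Lab) : Set A :=
  {a | (a ∈ labDec L1 ∧ L2 a = Lab.UNDEC) ∨ (L1 a = Lab.UNDEC ∧ a ∈ labDec L2)}
/-- IUO Hamming sets `L1 ⊖ᴹ L2` as a pair. -/
def iuoSets (L1 L2 : A → Lab) : Set A × Set A := (ioSet L1 L2, duSet L1 L2)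
/-- Componentwise inclusion on pairs of sets. -/
def PairSub {α : Type} (p q : Set α × Set α) : Prop := p.1 ⊆ q.1 ∧ p.2 ⊆ q.2
/-- IUO Hamming distance `L1 |⊖ᴹ| L2`. -/
noncomputable def iuoDist (L1 L2 : A → Lab) : ℕ :=
  2 * (ioSet L1 L2).ncard + (duSet L1 L2).ncard

/-- Two arguments are in-sync (with respect to the complete labelings of the framework). -/
def InSync (df : A → A → Prop) (a b : A) : Prop :=
  (∀ L : A → Lab, Complete df L → L a = L b) ∨
  (∀ L : A → Lab, Complete df L →
    (L a = Lab.IN ↔ L b = Lab.OUT) ∧ (L a = Lab.OUT ↔ L b = Lab.IN))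

/-- An issue: an equivalence class of the in-sync relation. -/
def IsIssue (df : A → A → Prop) (B : Set A) : Prop :=
  ∃ a : A, B = {b | InSync df a b}

/-- Issue-wise set `L1 ⊖_W L2`. -/
def iwSet (df : A → A → Prop) (L1 L2 : A → Lab) : Set (Set A) :=
  {B | IsIssue df B ∧ ∃ a ∈ B, L1 a ≠ L2 a}
/-- Issue-wise distance `L1 |⊖_W| L2`. -/
noncomputable def iwDist (df : A → A → Prop) (L1 L2 : A → Lab) : ℕ := (iwSet df L1 L2).ncard

/-- in–out Issue-wise set `L1 ⊖_Wⁱᵒ L2`. -/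
def iwIoSet (df : A → A → Prop) (L1 L2 : A → Lab) : Set (Set A) :=
  {B | IsIssue df B ∧ ∃ a ∈ B, a ∈ ioSet L1 L2}
/-- dec–undec Issue-wise set `L1 ⊖_Wᵈᵘ L2`. -/
def iwDuSet (df : A → A → Prop) (L1 L2 : A → Lab) : Set (Set A) :=
  {B | IsIssue df B ∧ ∃ a ∈ B, a ∈ duSet L1 L2}
/-- IUO Issue-wise sets `L1 ⊖_Wᴹ L2` as a pair. -/
def iwIuoSets (df : A → A → Prop) (L1 L2 : A → Lab) : Set (Set A) × Set (Set A) :=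
  (iwIoSet df L1 L2, iwDuSet df L1 L2)
/-- IUO Issue-wise distance `L1 |⊖_Wᴹ| L2`. -/
noncomputable def iwIuoDist (df : A → A → Prop) (L1 L2 : A → Lab) : ℕ :=
  2 * (iwIoSet df L1 L2).ncard + (iwDuSet df L1 L2).ncard

/- Preferences: `pref Li L L'` means `L ⪰ L'` for an agent whose most preferred labeling is `Li`. -/
/-- Hamming set based preference `⪰_{i,⊖}`. -/
def hamSetPref (Li L L' : A → Lab) : Prop := hamSet L Li ⊆ hamSet L' Li
/-- Hamming distance based preference `⪰_{i,|⊖|}`. -/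
def hamDistPref (Li L L' : A → Lab) : Prop := hamDist L Li ≤ hamDist L' Li
/-- IUO Hamming sets based preference `⪰_{i,⊖ᴹ}`. -/
def iuoSetPref (Li L L' : A → Lab) : Prop := PairSub (iuoSets L Li) (iuoSets L' Li)
/-- IUO Hamming distance based preference `⪰_{i,|⊖ᴹ|}`. -/
def iuoDistPref (Li L L' : A → Lab) : Prop := iuoDist L Li ≤ iuoDist L' Li
/-- Issue-wise set based preference `⪰_{i,⊖_W}`. -/
def iwSetPref (df : A → A → Prop) (Li L L' : A → Lab) : Prop := iwSet df L Li ⊆ iwSet df L' Li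
/-- Issue-wise distance based preference `⪰_{i,|⊖_W|}`. -/
def iwDistPref (df : A → A → Prop) (Li L L' : A → Lab) : Prop := iwDist df L Li ≤ iwDist df L' Li
/-- IUO Issue-wise sets based preference `⪰_{i,⊖_Wᴹ}`. -/
def iwIuoSetPref (df : A → A → Prop) (Li L L' : A → Lab) : Prop :=
  PairSub (iwIuoSets df L Li) (iwIuoSets df L' Li)
/-- IUO Issue-wise distance based preference `⪰_{i,|⊖_Wᴹ|}`. -/
def iwIuoDistPref (df : A → A → Prop) (Li L L' : A → Lab) : Prop :=
  iwIuoDist df L Li ≤ iwIuoDist df L' Li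

/-- Strict part of a preference relation. -/
def StrictPref (pref : (A → Lab) → (A → Lab) → Prop) (L L' : A → Lab) : Prop :=
  pref L L' ∧ ¬ pref L' L

/-- `L'` Pareto dominates `L` with respect to the profile of preference relations `pref`. -/
def Dominates {ι : Type} (pref : ι → (A → Lab) → (A → Lab) → Prop) (L' L : A → Lab) : Prop :=
  (∀ i : ι, pref i L' L) ∧ ∃ j : ι, StrictPref (pref j) L' L

/-- `L` is Pareto optimal in `S`: no element of `S` Pareto dominates `L`. -/
def ParetoOptimalIn {ι : Type} (pref : ι → (A → Lab) → (A → Lab) → Prop)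
    (S : Set (A → Lab)) (L : A → Lab) : Prop :=
  ∀ L' ∈ S, ¬ Dominates pref L' L

/-- `LSO` is the skeptical outcome of profile `P`: the greatest admissible labeling below the
profile. -/
def IsSkeptical {n : ℕ} (df : A → A → Prop) (P : Fin n → (A → Lab)) (LSO : A → Lab) : Prop :=
  Admissible df LSO ∧ (∀ i : Fin n, LabLeq LSO (P i)) ∧
  ∀ L : A → Lab, Admissible df L → (∀ i : Fin n, LabLeq L (P i)) → LabLeq L LSO

/-- `LC` is the credulous initial outcome of the profile `P`. -/
def IsCio {n : ℕ} (P : Fin n → (A → Lab)) (LC : A → Lab) : Prop :=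
  ∀ a : A,
    (LC a = Lab.IN ↔ (∃ i : Fin n, P i a = Lab.IN) ∧ ∀ j : Fin n, P j a ≠ Lab.OUT) ∧
    (LC a = Lab.OUT ↔ (∃ i : Fin n, P i a = Lab.OUT) ∧ ∀ j : Fin n, P j a ≠ Lab.IN)

/-- `LCO` is the credulous outcome of `P`: the greatest admissible labeling `⊑ cio(P)`. -/
def IsCredulous {n : ℕ} (df : A → A → Prop) (P : Fin n → (A → Lab)) (LCO : A → Lab) : Prop :=
  ∃ LCIO : A → Lab, IsCio P LCIO ∧ Admissible df LCO ∧ LabLeq LCO LCIO ∧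
    ∀ L : A → Lab, Admissible df L → LabLeq L LCIO → LabLeq L LCO

/-- `LSCO` is the super credulous outcome of `P` given credulous outcome `LCO`:
the least complete labeling above `LCO`. -/
def IsSuperCredulousOf (df : A → A → Prop) (LCO LSCO : A → Lab) : Prop :=
  Complete df LSCO ∧ LabLeq LCO LSCO ∧
    ∀ L : A → Lab, Complete df L → LabLeq LCO L → LabLeq LSCO L

lemma hamSet_eq_union (L1 L2 : A → Lab) : hamSet L1 L2 = ioSet L1 L2 ∪ duSet L1 L2 := by
  ext a
  simp only [hamSet, ioSet, duSet, labDec, labIn, labOut, Set.mem_setOf_eq, Set.mem_union]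
  cases h1 : L1 a <;> cases h2 : L2 a <;> simp

lemma io_du_disjoint (L1 L2 : A → Lab) : Disjoint (ioSet L1 L2) (duSet L1 L2) := by
  rw [Set.disjoint_left]
  intro a ha hb
  simp only [ioSet, duSet, labDec, labIn, labOut, Set.mem_setOf_eq, Set.mem_union] at ha hb
  rcases ha with ⟨h1, h2⟩ | ⟨h1, h2⟩ <;> rcases hb with ⟨_, h4⟩ | ⟨h3, _⟩ <;> simp_all

lemma hamDist_eq_add [Fintype A] (L1 L2 : A → Lab) :
    hamDist L1 L2 = (ioSet L1 L2).ncard + (duSet L1 L2).ncard := by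
  rw [hamDist, hamSet_eq_union,
    Set.ncard_union_eq (io_du_disjoint L1 L2) (Set.toFinite _) (Set.toFinite _)]

lemma hamDist_le_iuoDist [Fintype A] (L1 L2 : A → Lab) : hamDist L1 L2 ≤ iuoDist L1 L2 := by
  rw [hamDist_eq_add, iuoDist]; omega

lemma ioSet_empty_of_compat (L1 L2 : A → Lab) (h : LabCompatible L1 L2) :
    ioSet L1 L2 = ∅ := by
  obtain ⟨h1, h2⟩ := h
  ext a
  simp only [ioSet, Set.mem_setOf_eq, Set.mem_empty_iff_false, iff_false]
  rintro (⟨ha, hb⟩ | ⟨ha, hb⟩)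
  · exact Set.eq_empty_iff_forall_notMem.mp h1 a ⟨ha, hb⟩
  · exact Set.eq_empty_iff_forall_notMem.mp h2 a ⟨ha, hb⟩

lemma iuoDist_eq_hamDist_of_compat [Fintype A] (L1 L2 : A → Lab) (h : LabCompatible L1 L2) :
    iuoDist L1 L2 = hamDist L1 L2 := by
  rw [iuoDist, hamDist_eq_add, ioSet_empty_of_compat L1 L2 h]
  simp

/-- for a compatible operator, if every strategic lie is benevolent under Hamming
distance based preferences, then every strategic lie is benevolent under IUO Hamming distance
based preferences. -/
theorem benevolence_carries_hamDist_to_iuoDist {A : Type} [Fintype A] {n : ℕ}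
    (Op : (Fin n → (A → Lab)) → (A → Lab))
    (hOp : ∀ M : Fin n → (A → Lab), ∀ j : Fin n, LabCompatible (Op M) (M j))
    (Ls : Fin n → (A → Lab))
    (hben : ∀ (k : Fin n) (L'k : A → Lab),
      StrictPref (hamDistPref (Ls k)) (Op (Function.update Ls k L'k)) (Op Ls) →
      (∀ i : Fin n, hamDistPref (Ls i) (Op (Function.update Ls k L'k)) (Op Ls)) ∧
      ∃ j : Fin n, j ≠ k ∧
        StrictPref (hamDistPref (Ls j)) (Op (Function.update Ls k L'k)) (Op Ls)) :
    ∀ (k : Fin n) (L'k : A → Lab),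
      StrictPref (iuoDistPref (Ls k)) (Op (Function.update Ls k L'k)) (Op Ls) →
      (∀ i : Fin n, iuoDistPref (Ls i) (Op (Function.update Ls k L'k)) (Op Ls)) ∧
      ∃ j : Fin n, j ≠ k ∧
        StrictPref (iuoDistPref (Ls j)) (Op (Function.update Ls k L'k)) (Op Ls) := by
  intro k L'k hstrict
  set LP := Op Ls with hLP
  set LP' := Op (Function.update Ls k L'k) with hLP'
  have hcomp : ∀ i : Fin n, LabCompatible LP (Ls i) := hOp Ls
  have hcomp' : ∀ j : Fin n, j ≠ k → LabCompatible LP' (Ls j) := by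
    intro j hj
    have := hOp (Function.update Ls k L'k) j
    rwa [Function.update_of_ne hj] at this
  have hklt : iuoDist LP' (Ls k) < iuoDist LP (Ls k) :=
    lt_of_le_of_ne hstrict.1 (fun h => hstrict.2 (le_of_eq h.symm))
  have hk_ham : StrictPref (hamDistPref (Ls k)) LP' LP := by
    have h1 : hamDist LP' (Ls k) < hamDist LP (Ls k) := by
      calc hamDist LP' (Ls k) ≤ iuoDist LP' (Ls k) := hamDist_le_iuoDist _ _
        _ < iuoDist LP (Ls k) := hklt
        _ = hamDist LP (Ls k) := iuoDist_eq_hamDist_of_compat _ _ (hcomp k)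
    exact ⟨le_of_lt h1, fun h => absurd h (not_le.2 h1)⟩
  obtain ⟨hall, j, hjk, hjs⟩ := hben k L'k hk_ham
  constructor
  · intro i
    by_cases hik : i = k
    · subst hik; exact hstrict.1
    · show iuoDist LP' (Ls i) ≤ iuoDist LP (Ls i)
      rw [iuoDist_eq_hamDist_of_compat _ _ (hcomp' i hik),
        iuoDist_eq_hamDist_of_compat _ _ (hcomp i)]
      exact hall i
  · refine ⟨j, hjk, ?_, ?_⟩
    · show iuoDist LP' (Ls j) ≤ iuoDist LP (Ls j)
      rw [iuoDist_eq_hamDist_of_compat _ _ (hcomp' j hjk),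
        iuoDist_eq_hamDist_of_compat _ _ (hcomp j)]
      exact hjs.1
    · show ¬ iuoDist LP (Ls j) ≤ iuoDist LP' (Ls j)
      rw [iuoDist_eq_hamDist_of_compat _ _ (hcomp' j hjk),
        iuoDist_eq_hamDist_of_compat _ _ (hcomp j)]
      exact hjs.2
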